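/- The limit of T(m) as m → ∞ exists and equals (2 − √2)/2; that is, lim_{m→∞} Σ_{r=2}^{m+1} C(2r, r) · C(m+1, r) · (r−1)/(2^r · C(4m, r)) = (2 − √2)/2. -/

import Mathlib

open Finset Filter Topology

/-- `T m = ∑_{r=2}^{m+1} C(2r, r) C(m+1, r) (r−1)/(2^r C(4m, r))`. -/
noncomputable def T (m : ℕ) : ℝ :=
  ∑ r ∈ Finset.Icc 2 (m + 1),
    (Nat.choose (2 * r) r : ℝ) * (Nat.choose (m + 1) r : ℝ) * ((r : ℝ) - 1) /
      (2 ^ r * (Nat.choose (4 * m) r : ℝ))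


noncomputable def aa (r : ℕ) : ℝ := (Nat.choose (2*r) r : ℝ)

lemma aa_nonneg (r : ℕ) : 0 ≤ aa r := Nat.cast_nonneg _
lemma aa_pos (r : ℕ) : 0 < aa r := by
  have := Nat.centralBinom_pos r
  unfold aa; rw [← Nat.centralBinom_eq_two_mul_choose]; exact_mod_cast this
lemma aa_rec (r : ℕ) : ((r:ℝ)+1) * aa (r+1) = (4*r+2) * aa r := by
  have := Nat.succ_mul_centralBinom_succ r
  unfold aa
  rw [← Nat.centralBinom_eq_two_mul_choose, ← Nat.centralBinom_eq_two_mul_choose]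
  have h : ((r+1) * Nat.centralBinom (r+1) : ℝ) = (2 * (2*r+1) * Nat.centralBinom r : ℝ) := by
    exact_mod_cast congrArg (Nat.cast : ℕ → ℝ) this
  push_cast at h ⊢
  linarith
lemma aa_le (r : ℕ) : aa r ≤ 4 ^ r := by
  have h1 : Nat.choose (2*r) r ≤ Nat.choose (2*r+1) r := Nat.choose_le_choose r (by omega)
  have h2 : Nat.choose (2*r+1) r ≤ 4 ^ r := Nat.choose_middle_le_pow r
  unfold aa
  exact_mod_cast h1.trans h2




lemma aa_zero : aa 0 = 1 := by simp [aa]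

-- helper: 2 * ∑_{j≤n} j a_j a_{n-j} = n * ∑_{j≤n} a_j a_{n-j}
lemma half_sum (n : ℕ) :
    2 * ∑ j ∈ range (n+1), (j:ℝ) * (aa j * aa (n-j))
      = (n:ℝ) * ∑ j ∈ range (n+1), aa j * aa (n-j) := by
  have hrefl : ∑ j ∈ range (n+1), (j:ℝ) * (aa j * aa (n-j))
      = ∑ j ∈ range (n+1), ((n-j : ℕ):ℝ) * (aa (n-j) * aa (n-(n-j))) := by
    rw [← Finset.sum_range_reflect (fun j => ((j:ℕ):ℝ) * (aa j * aa (n-j))) (n+1)]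
    apply Finset.sum_congr rfl
    intro j hj
    simp only [Nat.add_sub_cancel]
  have hcong : ∑ j ∈ range (n+1), ((n-j : ℕ):ℝ) * (aa (n-j) * aa (n-(n-j)))
      = ∑ j ∈ range (n+1), ((n:ℝ) - j) * (aa j * aa (n-j)) := by
    apply Finset.sum_congr rfl
    intro j hj
    rw [Finset.mem_range] at hj
    have hjn : j ≤ n := by omega
    rw [Nat.sub_sub_self hjn, Nat.cast_sub hjn]
    ring
  have heq := hrefl.trans hcong
  calc 2 * ∑ j ∈ range (n+1), (j:ℝ) * (aa j * aa (n-j))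
      = ∑ j ∈ range (n+1), (j:ℝ) * (aa j * aa (n-j))
        + ∑ j ∈ range (n+1), ((n:ℝ) - j) * (aa j * aa (n-j)) := by
        linarith [heq]
    _ = ∑ j ∈ range (n+1), (n:ℝ) * (aa j * aa (n-j)) := by
        rw [← Finset.sum_add_distrib]; apply Finset.sum_congr rfl; intro j _; ring
    _ = (n:ℝ) * ∑ j ∈ range (n+1), aa j * aa (n-j) := by rw [Finset.mul_sum]

lemma conv (n : ℕ) : ∑ k ∈ range (n+1), aa k * aa (n-k) = 4^n := by
  induction n with
  | zero => simp [aa_zero]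
  | succ n ih =>
    have hne : ((n:ℝ)+1) ≠ 0 := by positivity
    have key : ((n:ℝ)+1) * ∑ k ∈ range (n+2), aa k * aa (n+1-k)
        = ((n:ℝ)+1) * (4 * 4^n) := by
      have step1 : ((n:ℝ)+1) * ∑ k ∈ range (n+2), aa k * aa (n+1-k)
          = 2 * ∑ k ∈ range (n+2), (k:ℝ) * (aa k * aa (n+1-k)) := by
        have := half_sum (n+1)
        push_cast at this ⊢
        linarith [this]
      have step2 : ∑ k ∈ range (n+2), (k:ℝ) * (aa k * aa (n+1-k))
          = ∑ j ∈ range (n+1), ((j:ℝ)+1) * (aa (j+1) * aa (n-j)) := by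
        rw [Finset.sum_range_succ' (fun k => (k:ℝ) * (aa k * aa (n+1-k))) (n+1)]
        simp only [Nat.cast_zero, zero_mul, add_zero]
        apply Finset.sum_congr rfl
        intro j hj
        have : n + 1 - (j+1) = n - j := by omega
        rw [this]
        push_cast; ring
      have step3 : ∑ j ∈ range (n+1), ((j:ℝ)+1) * (aa (j+1) * aa (n-j))
          = 4 * ∑ j ∈ range (n+1), (j:ℝ) * (aa j * aa (n-j))
            + 2 * ∑ j ∈ range (n+1), aa j * aa (n-j) := by
        rw [Finset.mul_sum, Finset.mul_sum, ← Finset.sum_add_distrib]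
        apply Finset.sum_congr rfl
        intro j _
        have := aa_rec j
        calc ((j:ℝ)+1) * (aa (j+1) * aa (n-j)) = (((j:ℝ)+1) * aa (j+1)) * aa (n-j) := by ring
          _ = ((4*j+2) * aa j) * aa (n-j) := by rw [this]
          _ = 4 * ((j:ℝ) * (aa j * aa (n-j))) + 2 * (aa j * aa (n-j)) := by ring
      rw [step1, step2, step3, ih]
      have := half_sum n
      rw [ih] at this
      linarith
    have := mul_left_cancel₀ hne key
    rw [this]; ring




noncomputable def cc (r : ℕ) : ℝ := aa r * (1/8)^r

lemma cc_nonneg (r : ℕ) : 0 ≤ cc r := by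
  unfold cc
  have := aa_nonneg r
  positivity

lemma cc_le (r : ℕ) : cc r ≤ (1/2)^r := by
  unfold cc
  calc aa r * (1/8)^r ≤ 4^r * (1/8)^r := by
        apply mul_le_mul_of_nonneg_right (aa_le r) (by positivity)
    _ = (1/2)^r := by rw [← mul_pow]; norm_num

lemma summable_cc : Summable cc := by
  apply Summable.of_nonneg_of_le cc_nonneg cc_le
  exact summable_geometric_of_lt_one (by norm_num) (by norm_num)

lemma summable_rcc : Summable (fun r : ℕ => (r:ℝ) * cc r) := by
  apply Summable.of_nonneg_of_le (fun r => mul_nonneg (Nat.cast_nonneg r) (cc_nonneg r))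
    (fun r => ?_) (summable_pow_mul_geometric_of_norm_lt_one 1 (r := (1/2:ℝ)) (by norm_num))
  calc (r:ℝ) * cc r ≤ (r:ℝ) * (1/2)^r := by
        apply mul_le_mul_of_nonneg_left (cc_le r) (Nat.cast_nonneg r)
    _ = (r:ℝ)^1 * (1/2)^r := by ring

lemma F_sq : (∑' r, cc r) * (∑' r, cc r) = 2 := by
  rw [tsum_mul_tsum_eq_tsum_sum_range_of_summable_norm
    (by simpa [abs_of_nonneg (cc_nonneg _)] using summable_cc)
    (by simpa [abs_of_nonneg (cc_nonneg _)] using summable_cc)]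
  have : ∀ n : ℕ, ∑ k ∈ range (n+1), cc k * cc (n-k) = (1/2)^n := by
    intro n
    have : ∑ k ∈ range (n+1), cc k * cc (n-k)
        = ∑ k ∈ range (n+1), aa k * aa (n-k) * (1/8)^n := by
      apply Finset.sum_congr rfl
      intro k hk
      rw [Finset.mem_range] at hk
      have hkn : k ≤ n := by omega
      unfold cc
      have : k + (n - k) = n := by omega
      calc aa k * (1/8)^k * (aa (n-k) * (1/8)^(n-k))
          = aa k * aa (n-k) * (1/8)^(k + (n-k)) := by rw [pow_add]; ring
        _ = aa k * aa (n-k) * (1/8)^n := by rw [this]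
    rw [this, ← Finset.sum_mul, conv, ← mul_pow]
    norm_num
  calc ∑' n : ℕ, ∑ k ∈ range (n+1), cc k * cc (n-k)
      = ∑' n : ℕ, ((1:ℝ)/2)^n := by exact tsum_congr this
    _ = 2 := by rw [tsum_geometric_of_lt_one (by norm_num) (by norm_num)]; norm_num

lemma F_eq : (∑' r, cc r) = Real.sqrt 2 := by
  have h0 : 0 ≤ ∑' r, cc r := tsum_nonneg cc_nonneg
  have := F_sq
  nlinarith [Real.sq_sqrt (by norm_num : (2:ℝ) ≥ 0), Real.sqrt_nonneg 2,
    sq_nonneg ((∑' r, cc r) - Real.sqrt 2), sq_nonneg ((∑' r, cc r) + Real.sqrt 2)]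

lemma D_eq : (∑' r : ℕ, (r:ℝ) * cc r) = Real.sqrt 2 / 2 := by
  have hshift : (∑' r : ℕ, (r:ℝ) * cc r) = ∑' r : ℕ, ((r:ℝ)+1) * cc (r+1) := by
    rw [summable_rcc.tsum_eq_zero_add]
    push_cast
    simp
  have hterm : ∀ r : ℕ, ((r:ℝ)+1) * cc (r+1) = (1/2) * ((r:ℝ) * cc r) + (1/4) * cc r := by
    intro r
    unfold cc
    have h := aa_rec r
    calc ((r:ℝ)+1) * (aa (r+1) * (1/8)^(r+1))
        = (((r:ℝ)+1) * aa (r+1)) * (1/8)^(r+1) := by ring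
      _ = ((4*r+2) * aa r) * (1/8)^(r+1) := by rw [h]
      _ = (1/2) * ((r:ℝ) * (aa r * (1/8)^r)) + (1/4) * (aa r * (1/8)^r) := by
          rw [pow_succ]; ring
  have hsum2 : (∑' r : ℕ, ((r:ℝ)+1) * cc (r+1))
      = (1/2) * (∑' r : ℕ, (r:ℝ) * cc r) + (1/4) * (∑' r, cc r) := by
    rw [tsum_congr hterm, Summable.tsum_add ((summable_rcc).mul_left _) ((summable_cc).mul_left _),
      tsum_mul_left, tsum_mul_left]
  have := hshift.trans hsum2
  rw [F_eq] at this
  linarith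




lemma ratio_eq (m k : ℕ) (hm : 1 ≤ m) (hk : k ≤ m+1) :
    ((m+1).choose k : ℝ) / ((4*m).choose k : ℝ)
      = ∏ i ∈ range k, (((m:ℝ)+1-i)/(4*(m:ℝ)-i)) := by
  have hfac : (k.factorial : ℝ) ≠ 0 := by positivity
  have hp1 : ∏ i ∈ range k, (((m:ℝ)+1)-i) = (k.factorial : ℝ) * ((m+1).choose k : ℝ) := by
    have h := Nat.descFactorial_eq_factorial_mul_choose (m+1) k
    rw [Nat.descFactorial_eq_prod_range] at h
    calc ∏ i ∈ range k, (((m:ℝ)+1)-i) = ∏ i ∈ range k, ((m+1-i : ℕ) : ℝ) := by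
          apply prod_congr rfl; intro i hi; rw [mem_range] at hi
          rw [Nat.cast_sub (by omega)]; push_cast; ring
      _ = ((∏ i ∈ range k, (m+1-i) : ℕ) : ℝ) := by rw [Nat.cast_prod]
      _ = _ := by rw [h]; push_cast; ring
  have hp2 : ∏ i ∈ range k, (4*(m:ℝ)-i) = (k.factorial : ℝ) * ((4*m).choose k : ℝ) := by
    have h := Nat.descFactorial_eq_factorial_mul_choose (4*m) k
    rw [Nat.descFactorial_eq_prod_range] at h
    calc ∏ i ∈ range k, (4*(m:ℝ)-i) = ∏ i ∈ range k, ((4*m-i : ℕ) : ℝ) := by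
          apply prod_congr rfl; intro i hi; rw [mem_range] at hi
          rw [Nat.cast_sub (by omega)]; push_cast; ring
      _ = ((∏ i ∈ range k, (4*m-i) : ℕ) : ℝ) := by rw [Nat.cast_prod]
      _ = _ := by rw [h]; push_cast; ring
  rw [Finset.prod_div_distrib, hp1, hp2, mul_div_mul_left _ _ hfac]

lemma ratio_nonneg (m k : ℕ) (hm : 1 ≤ m) (hk : k ≤ m+1) :
    0 ≤ ∏ i ∈ range k, (((m:ℝ)+1-i)/(4*(m:ℝ)-i)) := by
  apply Finset.prod_nonneg
  intro i hi
  rw [mem_range] at hi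
  have h1 : (i:ℝ) ≤ m := by
    have : i ≤ m := by omega
    exact_mod_cast this
  have h2 : (1:ℝ) ≤ m := by exact_mod_cast hm
  apply div_nonneg <;> linarith

lemma ratio_le (m k : ℕ) (hm : 3 ≤ m) (hk : k ≤ m+1) :
    ∏ i ∈ range k, (((m:ℝ)+1-i)/(4*(m:ℝ)-i)) ≤ (1/3)^k := by
  calc ∏ i ∈ range k, (((m:ℝ)+1-i)/(4*(m:ℝ)-i)) ≤ ∏ i ∈ range k, ((1:ℝ)/3) := by
        apply Finset.prod_le_prod
        · intro i hi
          rw [mem_range] at hi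
          have h1 : (i:ℝ) ≤ m := by exact_mod_cast (by omega : i ≤ m)
          have h2 : (3:ℝ) ≤ m := by exact_mod_cast hm
          apply div_nonneg <;> linarith
        · intro i hi
          rw [mem_range] at hi
          have h0 : (0:ℝ) ≤ i := Nat.cast_nonneg i
          have h1 : (i:ℝ) ≤ m := by exact_mod_cast (by omega : i ≤ m)
          have h2 : (3:ℝ) ≤ m := by exact_mod_cast hm
          rw [div_le_div_iff₀ (by linarith) (by norm_num)]
          nlinarith
    _ = (1/3)^k := by rw [Finset.prod_const, Finset.card_range]

lemma ratio_tendsto (k : ℕ) :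
    Tendsto (fun m : ℕ => ∏ i ∈ range k, (((m:ℝ)+1-i)/(4*(m:ℝ)-i))) atTop
      (𝓝 ((1/4)^k)) := by
  have : ((1/4 : ℝ))^k = ∏ _i ∈ range k, ((1:ℝ)/4) := by
    rw [Finset.prod_const, Finset.card_range]
  rw [this]
  apply tendsto_finset_prod
  intro i _
  have h1 : Tendsto (fun m : ℕ => 1 + ((1:ℝ)-i)/m) atTop (𝓝 1) := by
    have := (tendsto_const_div_atTop_nhds_zero_nat ((1:ℝ)-i)).const_add 1
    simpa using this
  have h2 : Tendsto (fun m : ℕ => 4 - (i:ℝ)/m) atTop (𝓝 4) := by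
    have := (tendsto_const_div_atTop_nhds_zero_nat ((i:ℝ))).const_sub 4
    simpa using this
  have h3 := h1.div h2 (by norm_num)
  refine Tendsto.congr' ?_ h3
  filter_upwards [eventually_ge_atTop (i+1)] with m hm
  show (1 + ((1:ℝ)-i)/m) / (4 - (i:ℝ)/m) = ((m:ℝ)+1-i)/(4*(m:ℝ)-i)
  have hm0 : (m:ℝ) ≠ 0 := Nat.cast_ne_zero.mpr (by omega)
  have hi : (i:ℝ) < m := by exact_mod_cast hm
  have hmpos : (0:ℝ) < m := lt_of_le_of_lt (Nat.cast_nonneg i) hi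
  have hden : 4*(m:ℝ) - i ≠ 0 := by nlinarith
  have hden2 : (4:ℝ) - (i:ℝ)/m ≠ 0 := by
    have : (i:ℝ)/m < 1 := (div_lt_one hmpos).mpr hi
    intro h; nlinarith
  field_simp
  ring


/-- the summand with the indicator of `Icc 2 (m+1)` built in -/
noncomputable def ff (m k : ℕ) : ℝ :=
  if k ∈ Finset.Icc 2 (m+1) then
    aa k * ((m+1).choose k : ℝ) * ((k:ℝ)-1) / (2^k * ((4*m).choose k : ℝ))
  else 0

/-- the pointwise limit -/
noncomputable def gg (k : ℕ) : ℝ :=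
  if 2 ≤ k then aa k * ((k:ℝ)-1) / 2^k * (1/4)^k else 0

lemma T_eq_tsum (m : ℕ) : T m = ∑' k, ff m k := by
  rw [tsum_eq_sum (s := Finset.Icc 2 (m+1)) (fun b hb => by rw [ff, if_neg hb])]
  unfold T ff aa
  apply Finset.sum_congr rfl
  intro k hk
  rw [if_pos hk]

lemma ff_tendsto (k : ℕ) : Tendsto (fun m => ff m k) atTop (𝓝 (gg k)) := by
  by_cases hk : 2 ≤ k
  · have base := (ratio_tendsto k).const_mul (aa k * ((k:ℝ)-1) / 2^k)
    rw [gg, if_pos hk]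
    refine Tendsto.congr' ?_ base
    filter_upwards [eventually_ge_atTop k] with m hm
    have hm1 : 1 ≤ m := by omega
    have hkm : k ≤ m+1 := by omega
    rw [ff, if_pos (Finset.mem_Icc.mpr ⟨hk, hkm⟩), ← ratio_eq m k hm1 hkm]
    ring
  · have h0 : ∀ m : ℕ, ff m k = 0 := by
      intro m
      rw [ff, if_neg]
      rw [Finset.mem_Icc]
      omega
    rw [gg, if_neg hk]
    simpa [h0] using tendsto_const_nhds (α := ℝ) (f := atTop (α := ℕ))

lemma summable_bound : Summable (fun k : ℕ => (k:ℝ) * (2/3)^k) := by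
  have := summable_pow_mul_geometric_of_norm_lt_one (R := ℝ) 1 (r := (2/3:ℝ))
    (by rw [Real.norm_eq_abs, abs_of_pos (by norm_num : (0:ℝ) < 2/3)]; norm_num)
  simpa using this

lemma ff_bound : ∀ᶠ m in atTop, ∀ k, ‖ff m k‖ ≤ (k:ℝ) * (2/3)^k := by
  filter_upwards [eventually_ge_atTop 3] with m hm
  intro k
  by_cases hk : k ∈ Finset.Icc 2 (m+1)
  · rw [Finset.mem_Icc] at hk
    obtain ⟨hk2, hkm⟩ := hk
    have hm1 : 1 ≤ m := by omega
    have hrpos := ratio_nonneg m k hm1 hkm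
    have hrle := ratio_le m k hm hkm
    have hknn : (0:ℝ) ≤ (k:ℝ) - 1 := by
      have : (2:ℝ) ≤ k := by exact_mod_cast hk2
      linarith
    have hexp : ff m k = (aa k * ((k:ℝ)-1) / 2^k) * ∏ i ∈ range k, (((m:ℝ)+1-i)/(4*(m:ℝ)-i)) := by
      rw [ff, if_pos (Finset.mem_Icc.mpr ⟨hk2, hkm⟩), ← ratio_eq m k hm1 hkm]
      ring
    have hcnn : (0:ℝ) ≤ aa k * ((k:ℝ)-1) / 2^k := by
      have := aa_nonneg k
      positivity
    have hnn : 0 ≤ ff m k := by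
      rw [hexp]; exact mul_nonneg hcnn hrpos
    rw [Real.norm_eq_abs, abs_of_nonneg hnn, hexp]
    have hcle : aa k * ((k:ℝ)-1) / 2^k ≤ 4^k * k / 2^k := by
      apply div_le_div_of_nonneg_right ?_ (by positivity)
      · have h1 := aa_le k
        have h2 : ((k:ℝ)-1) ≤ k := by linarith
        have := aa_nonneg k
        nlinarith
    calc (aa k * ((k:ℝ)-1) / 2^k) * ∏ i ∈ range k, (((m:ℝ)+1-i)/(4*(m:ℝ)-i))
        ≤ (4^k * (k:ℝ) / 2^k) * (1/3)^k := by
          apply mul_le_mul hcle hrle hrpos (by positivity)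
      _ = (k:ℝ) * (2/3)^k := by
          rw [div_mul_eq_mul_div, mul_comm ((4:ℝ)^k) (k:ℝ), mul_assoc, ← mul_pow,
            mul_div_assoc, ← div_pow]
          norm_num
  · rw [ff, if_neg hk]
    simp
    positivity

lemma gg_tsum : ∑' k, gg k = (2 - Real.sqrt 2) / 2 := by
  have hgg : ∀ k : ℕ, gg k = ((k:ℝ)-1) * cc k + (if k = 0 then (1:ℝ) else 0) := by
    intro k
    match k with
    | 0 => simp [gg, cc, aa]
    | 1 => simp [gg, cc]
    | (n+2) =>
      rw [gg, if_pos (by omega), if_neg (by omega), cc, add_zero]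
      rw [show ((1:ℝ)/8)^(n+2) = (1/2)^(n+2)*(1/4)^(n+2) by rw [← mul_pow]; norm_num,
        show ((1:ℝ)/2)^(n+2) = 1/2^(n+2) by rw [div_pow, one_pow]]
      ring
  have hs1 : Summable (fun k : ℕ => ((k:ℝ)-1) * cc k) := by
    have := summable_rcc.sub summable_cc
    apply this.congr
    intro k; ring
  have hs2 : Summable (fun k : ℕ => if k = 0 then (1:ℝ) else 0) := by
    apply summable_of_finite_support
    apply Set.Finite.subset (Set.finite_singleton 0)
    intro x hx
    simp only [Function.mem_support] at hx
    by_contra h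
    simp only [Set.mem_singleton_iff] at h
    exact hx (if_neg h)
  calc ∑' k, gg k = ∑' k : ℕ, (((k:ℝ)-1) * cc k + (if k = 0 then (1:ℝ) else 0)) := tsum_congr hgg
    _ = (∑' k : ℕ, ((k:ℝ)-1) * cc k) + ∑' k : ℕ, (if k = 0 then (1:ℝ) else 0) := Summable.tsum_add hs1 hs2
    _ = ((∑' k : ℕ, (k:ℝ) * cc k) - ∑' k : ℕ, cc k) + 1 := by
        rw [Summable.tsum_sub summable_rcc summable_cc |>.symm.trans (tsum_congr (fun k => by ring)) |>.symm]
        congr 1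
        exact tsum_ite_eq 0 (fun _ => (1:ℝ))
    _ = (2 - Real.sqrt 2) / 2 := by
        rw [D_eq, F_eq]
        ring

/-- `lim_{m→∞} T(m) = (2 − √2)/2`. -/
theorem T_limit :
    Filter.Tendsto T Filter.atTop (nhds ((2 - Real.sqrt 2) / 2)) := by
  rw [← gg_tsum]
  have : Tendsto (fun m => ∑' k, ff m k) atTop (𝓝 (∑' k, gg k)) :=
    tendsto_tsum_of_dominated_convergence summable_bound ff_tendsto ff_bound
  apply this.congr
  intro m
  exact (T_eq_tsum m).symm
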